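/- arXiv:2601.00091 — 3 statements merged into one kernel-verified Lean document; each statement's English description precedes it below -/
import Mathlib

section
/- Let G, g : ℝ → ℝ be convex differentiable functions. Then for every θ ∈ ℝ and δ > 0, |G'(θ) − g'(θ)| ≤ g'(θ+δ) − g'(θ−δ) + δ⁻¹ ∑_{y ∈ {θ−δ, θ, θ+δ}} |G(y) − g(y)|. -/
theorem convex_deriv_comparison (G g : ℝ → ℝ)
    (hG : ConvexOn ℝ Set.univ G) (hg : ConvexOn ℝ Set.univ g)
    (hGd : Differentiable ℝ G) (hgd : Differentiable ℝ g)
    (θ δ : ℝ) (hδ : 0 < δ) :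
    |deriv G θ - deriv g θ| ≤
      deriv g (θ + δ) - deriv g (θ - δ) +
        δ⁻¹ * ∑ y ∈ ({θ - δ, θ, θ + δ} : Finset ℝ), |G y - g y| := by
  have h1 : θ - δ < θ := by linarith
  have h2 : θ < θ + δ := by linarith
  have hsum : ∑ y ∈ ({θ - δ, θ, θ + δ} : Finset ℝ), |G y - g y|
      = |G (θ - δ) - g (θ - δ)| + |G θ - g θ| + |G (θ + δ) - g (θ + δ)| := by
    rw [Finset.sum_insert (by simp; constructor <;> intro h <;> linarith),
      Finset.sum_insert (by simp; intro h; linarith), Finset.sum_singleton]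
    ring
  -- slope inequalities, multiplied out
  have sG1 : deriv G θ ≤ slope G θ (θ + δ) :=
    hG.deriv_le_slope (Set.mem_univ _) (Set.mem_univ _) h2 (hGd θ)
  have sG2 : slope G (θ - δ) θ ≤ deriv G θ :=
    hG.slope_le_deriv (Set.mem_univ _) (Set.mem_univ _) h1 (hGd θ)
  have sg1 : deriv g θ ≤ slope g θ (θ + δ) :=
    hg.deriv_le_slope (Set.mem_univ _) (Set.mem_univ _) h2 (hgd θ)
  have sg2 : slope g (θ - δ) θ ≤ deriv g θ :=
    hg.slope_le_deriv (Set.mem_univ _) (Set.mem_univ _) h1 (hgd θ)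
  have sg3 : slope g θ (θ + δ) ≤ deriv g (θ + δ) :=
    hg.slope_le_deriv (Set.mem_univ _) (Set.mem_univ _) h2 (hgd (θ + δ))
  have sg4 : deriv g (θ - δ) ≤ slope g (θ - δ) θ :=
    hg.deriv_le_slope (Set.mem_univ _) (Set.mem_univ _) h1 (hgd (θ - δ))
  simp only [slope_def_field, div_eq_inv_mul] at sG1 sG2 sg1 sg2 sg3 sg4
  have e1 : θ + δ - θ = δ := by ring
  have e2 : θ - (θ - δ) = δ := by ring
  rw [e1] at sG1 sg1 sg3
  rw [e2] at sG2 sg2 sg4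
  have hinv : δ⁻¹ * δ = 1 := inv_mul_cancel₀ hδ.ne'
  have hinvpos : 0 < δ⁻¹ := inv_pos.mpr hδ
  have a1 : G (θ - δ) - g (θ - δ) ≤ |G (θ - δ) - g (θ - δ)| := le_abs_self _
  have a2 : -(G (θ - δ) - g (θ - δ)) ≤ |G (θ - δ) - g (θ - δ)| := neg_le_abs _
  have b1 : G θ - g θ ≤ |G θ - g θ| := le_abs_self _
  have b2 : -(G θ - g θ) ≤ |G θ - g θ| := neg_le_abs _
  have c1 : G (θ + δ) - g (θ + δ) ≤ |G (θ + δ) - g (θ + δ)| := le_abs_self _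
  have c2 : -(G (θ + δ) - g (θ + δ)) ≤ |G (θ + δ) - g (θ + δ)| := neg_le_abs _
  rw [hsum, abs_sub_le_iff]
  constructor <;> nlinarith [mul_le_mul_of_nonneg_left a1 hinvpos.le,
    mul_le_mul_of_nonneg_left a2 hinvpos.le, mul_le_mul_of_nonneg_left b1 hinvpos.le,
    mul_le_mul_of_nonneg_left b2 hinvpos.le, mul_le_mul_of_nonneg_left c1 hinvpos.le,
    mul_le_mul_of_nonneg_left c2 hinvpos.le]
end

section
/- Let w : ℝ → ℝ be a twice differentiable concave function achieving its maximum at x* ∈ ℝ, and suppose w''(x) ≤ −K' for all x, where K' > 0. Assume e^{w} is integrable. Then K' · ∫ (x − x*)² e^{w(x)} dx ≤ ∫ e^{w(x)} dx. -/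
/-!
Put `f = exp ∘ w`. Since `w'` vanishes at the mode and `w'' ≤ -K'`, the drift satisfies
`(x - x*) w'(x) ≤ -K' (x - x*)²`, hence `K' (x - x*)² f ≤ f - ((x - x*) f)'`. Integrating over
`[x* - n, x* + n]`, the boundary term `(x - x*) f` is nonnegative at the right end and nonpositive
at the left end, so it can be dropped; letting `n → ∞` gives the bound.
-/

open MeasureTheory Filter Topology

theorem sub_mul_sub_le_neg_mul_sq {u u' : ℝ → ℝ} {K : ℝ} (hu : ∀ x, HasDerivAt u (u' x) x)
    (hu' : ∀ x, u' x ≤ -K) (c x : ℝ) : (x - c) * (u x - u c) ≤ -K * (x - c) ^ 2 := by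
  have hdiff : Differentiable ℝ u := fun x => (hu x).differentiableAt
  have hderiv : ∀ x, deriv u x ≤ -K := fun x => (hu x).deriv ▸ hu' x
  rcases le_total c x with hcx | hxc
  · have := image_sub_le_mul_sub_of_deriv_le hdiff hderiv hcx
    nlinarith [sub_nonneg.mpr hcx]
  · have := image_sub_le_mul_sub_of_deriv_le hdiff hderiv hxc
    nlinarith [sub_nonneg.mpr hxc]

theorem intervalIntegral_mul_sq_mul_exp_le {w w' : ℝ → ℝ} {K a b c : ℝ}
    (hw : ∀ x, HasDerivAt w (w' x) x) (hw'c : Continuous w')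
    (hdrift : ∀ x, (x - c) * w' x ≤ -K * (x - c) ^ 2) (hac : a ≤ c) (hcb : c ≤ b) :
    ∫ x in a..b, K * (x - c) ^ 2 * Real.exp (w x) ≤ ∫ x in a..b, Real.exp (w x) := by
  have hwc : Continuous w := continuous_iff_continuousAt.mpr fun x => (hw x).continuousAt
  set g : ℝ → ℝ := fun x => (x - c) * Real.exp (w x)
  set g' : ℝ → ℝ := fun x => Real.exp (w x) + (x - c) * (Real.exp (w x) * w' x)
  have hg : ∀ x, HasDerivAt g (g' x) x := fun x => by
    simpa [g, g'] using ((hasDerivAt_id x).sub_const c).fun_mul (hw x).exp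
  have hg'i : IntervalIntegrable g' volume a b :=
    (by fun_prop : Continuous g').intervalIntegrable _ _
  have hexpi : IntervalIntegrable (fun x => Real.exp (w x)) volume a b :=
    (by fun_prop : Continuous _).intervalIntegrable _ _
  have hpointwise : ∀ x, K * (x - c) ^ 2 * Real.exp (w x) ≤ Real.exp (w x) - g' x := fun x => by
    have := mul_le_mul_of_nonneg_right (hdrift x) (Real.exp_pos (w x)).le
    simp only [g']
    nlinarith
  have hgb : 0 ≤ g b := mul_nonneg (sub_nonneg.mpr hcb) (Real.exp_pos _).le
  have hga : g a ≤ 0 := mul_nonpos_of_nonpos_of_nonneg (sub_nonpos.mpr hac) (Real.exp_pos _).le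
  calc ∫ x in a..b, K * (x - c) ^ 2 * Real.exp (w x)
      ≤ ∫ x in a..b, (Real.exp (w x) - g' x) :=
        intervalIntegral.integral_mono_on (hac.trans hcb)
          ((by fun_prop : Continuous _).intervalIntegrable _ _) (hexpi.sub hg'i)
          fun x _ => hpointwise x
    _ = (∫ x in a..b, Real.exp (w x)) - (g b - g a) := by
        rw [intervalIntegral.integral_sub hexpi hg'i,
          intervalIntegral.integral_eq_sub_of_hasDerivAt (fun x _ => hg x) hg'i]
    _ ≤ ∫ x in a..b, Real.exp (w x) := by linarith

theorem integral_le_of_intervalIntegral_le {ι : Type*} {l : Filter ι} [l.NeBot]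
    [l.IsCountablyGenerated] {a b : ι → ℝ} {h : ℝ → ℝ} {C : ℝ} (ha : Tendsto a l atBot)
    (hb : Tendsto b l atTop) (hcont : Continuous h) (hnonneg : ∀ x, 0 ≤ h x)
    (hC : ∀ i, ∫ x in a i..b i, h x ≤ C) : ∫ x, h x ≤ C := by
  have hint : Integrable h := by
    refine integrable_of_intervalIntegral_norm_bounded C (fun i => hcont.integrableOn_Ioc) ha hb
      (Eventually.of_forall fun i => ?_)
    simpa only [Real.norm_of_nonneg (hnonneg _)] using hC i
  exact le_of_tendsto' (intervalIntegral_tendsto_integral hint ha hb) hC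

theorem log_concave_fluctuation_bound_general (w w' w'' : ℝ → ℝ) (xstar K' : ℝ)
    (hK' : 0 < K')
    (hw : ∀ x, HasDerivAt w (w' x) x)
    (hw' : ∀ x, HasDerivAt w' (w'' x) x)
    (hmax : IsMaxOn w Set.univ xstar)
    (hcurv : ∀ x, w'' x ≤ -K')
    (hint : Integrable (fun x => Real.exp (w x))) :
    K' * ∫ x, (x - xstar) ^ 2 * Real.exp (w x) ≤ ∫ x, Real.exp (w x) := by
  have hw'c : Continuous w' := continuous_iff_continuousAt.mpr fun x => (hw' x).continuousAt
  have hwc : Continuous w := continuous_iff_continuousAt.mpr fun x => (hw x).continuousAt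
  have hcrit : w' xstar = 0 := (hmax.isLocalMax univ_mem).hasDerivAt_eq_zero (hw xstar)
  have hdrift : ∀ x, (x - xstar) * w' x ≤ -K' * (x - xstar) ^ 2 := fun x => by
    simpa [hcrit] using sub_mul_sub_le_neg_mul_sq hw' hcurv xstar x
  simp_rw [← integral_const_mul, ← mul_assoc]
  refine integral_le_of_intervalIntegral_le (a := fun n : ℕ => xstar - n)
    (b := fun n => xstar + n)
    (tendsto_atBot_add_const_left _ _ (tendsto_neg_atBot_iff.mpr tendsto_natCast_atTop_atTop))
    (tendsto_atTop_add_const_left _ _ tendsto_natCast_atTop_atTop) (by fun_prop)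
    (fun x => by positivity) fun n => ?_
  have hn : (0 : ℝ) ≤ n := n.cast_nonneg
  calc ∫ x in xstar - n..xstar + n, K' * (x - xstar) ^ 2 * Real.exp (w x)
      ≤ ∫ x in xstar - n..xstar + n, Real.exp (w x) :=
        intervalIntegral_mul_sq_mul_exp_le hw hw'c hdrift (by linarith) (by linarith)
    _ ≤ ∫ x, Real.exp (w x) := by
        rw [intervalIntegral.integral_of_le (by linarith)]
        exact setIntegral_le_integral hint (Eventually.of_forall fun x => (Real.exp_pos _).le)

theorem log_concave_fluctuation_bound (w w' w'' : ℝ → ℝ) (xstar K' : ℝ)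
    (hK' : 0 < K')
    (hw : ∀ x, HasDerivAt w (w' x) x)
    (hw' : ∀ x, HasDerivAt w' (w'' x) x)
    (hconc : ConcaveOn ℝ Set.univ w)
    (hmax : IsMaxOn w Set.univ xstar)
    (hcurv : ∀ x, w'' x ≤ -K')
    (hint : Integrable (fun x => Real.exp (w x))) :
    K' * ∫ x, (x - xstar) ^ 2 * Real.exp (w x) ≤ ∫ x, Real.exp (w x) :=
  log_concave_fluctuation_bound_general w w' w'' xstar K' hK' hw hw' hmax hcurv hint
end

section
/- Let (V_n) be a sequence of random vectors in ℝ^d converging in distribution to V, with induced laws P_n and P. Let A ⊆ ℝ^d be a closed continuity set of P with P(A) > 0 and P_n(A) > 0 for all n. Then the conditional laws P_n(·|A) converge weakly to P(·|A). -/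
/-!
Weak convergence `Pₙ → P` gives `P G ≤ liminf Pₙ G` for every open `G` (portmanteau). As `∂A`
is `P`-null, `A ∩ G` and the open set `interior A ∩ G` have the same `P`-measure, so the same
inequality holds for `A ∩ G`; moreover `Pₙ A → P A`. Dividing, the conditional laws satisfy the
open-set portmanteau condition, hence converge weakly.
-/

open MeasureTheory ProbabilityTheory Filter Topology

section Portmanteau

variable {Ω ι : Type*} [MeasurableSpace Ω] [TopologicalSpace Ω]
  {L : Filter ι} {μ : Measure Ω} {μs : ι → Measure Ω} {A G : Set Ω}

lemma measure_inter_le_liminf_of_null_frontier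
    (h_opens : ∀ G, IsOpen G → μ G ≤ L.liminf fun i ↦ μs i G) (hA : μ (frontier A) = 0)
    (hG : IsOpen G) : μ (A ∩ G) ≤ L.liminf fun i ↦ μs i (A ∩ G) := by
  have h_sub : A ∩ G ⊆ (interior A ∩ G) ∪ frontier A := by
    rintro x ⟨hxA, hxG⟩
    by_cases hx : x ∈ interior A
    · exact Or.inl ⟨hx, hxG⟩
    · exact Or.inr ⟨subset_closure hxA, hx⟩
  calc μ (A ∩ G) ≤ μ (interior A ∩ G) := by
        simpa [hA] using (measure_mono h_sub).trans (measure_union_le (μ := μ) _ _)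
    _ ≤ L.liminf fun i ↦ μs i (interior A ∩ G) := h_opens _ (isOpen_interior.inter hG)
    _ ≤ L.liminf fun i ↦ μs i (A ∩ G) :=
        liminf_le_liminf <| .of_forall fun _ ↦
          measure_mono (Set.inter_subset_inter_left _ interior_subset)

variable [OpensMeasurableSpace Ω]

lemma cond_le_liminf_cond_of_isOpen [L.NeBot] [IsProbabilityMeasure μ]
    [∀ i, IsProbabilityMeasure (μs i)]
    (h_opens : ∀ G, IsOpen G → μ G ≤ L.liminf fun i ↦ μs i G) (hA : μ (frontier A) = 0)
    (hG : IsOpen G) : μ[G|A] ≤ L.liminf fun i ↦ (μs i)[G|A] := by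
  have h_inv : Tendsto (fun i ↦ (μs i A)⁻¹) L (𝓝 (μ A)⁻¹) :=
    (tendsto_measure_of_null_frontier h_opens hA).inv
  calc μ[G|A] = (μ A)⁻¹ * μ (A ∩ G) := cond_apply' hG.measurableSet μ
    _ ≤ (L.liminf fun i ↦ (μs i A)⁻¹) * L.liminf fun i ↦ μs i (A ∩ G) := by
        rw [h_inv.liminf_eq]
        gcongr
        exact measure_inter_le_liminf_of_null_frontier h_opens hA hG
    _ ≤ L.liminf fun i ↦ (μs i A)⁻¹ * μs i (A ∩ G) := ENNReal.le_liminf_mul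
    _ = L.liminf fun i ↦ (μs i)[G|A] := by simp_rw [cond_apply' hG.measurableSet]

noncomputable def MeasureTheory.ProbabilityMeasure.cond (μ : ProbabilityMeasure Ω) (A : Set Ω)
    (hμA : (μ : Measure Ω) A ≠ 0) : ProbabilityMeasure Ω :=
  ⟨(μ : Measure Ω)[|A], cond_isProbabilityMeasure hμA⟩

lemma MeasureTheory.ProbabilityMeasure.tendsto_cond_of_null_frontier [L.IsCountablyGenerated]
    [HasOuterApproxClosed Ω] {μ : ProbabilityMeasure Ω} {μs : ι → ProbabilityMeasure Ω}
    (hμs : Tendsto μs L (𝓝 μ)) (hA : (μ : Measure Ω) (frontier A) = 0)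
    (hμA : (μ : Measure Ω) A ≠ 0) (hμsA : ∀ i, (μs i : Measure Ω) A ≠ 0) :
    Tendsto (fun i ↦ (μs i).cond A (hμsA i)) L (𝓝 (μ.cond A hμA)) := by
  rcases L.eq_or_neBot with rfl | _
  · exact tendsto_bot
  exact tendsto_of_forall_isOpen_le_liminf' fun _ hG ↦ cond_le_liminf_cond_of_isOpen
    (fun _ hG' ↦ ProbabilityMeasure.le_liminf_measure_open_of_tendsto hμs hG') hA hG

end Portmanteau

theorem conditioned_weak_convergence_general {d : ℕ}
    (P : ℕ → Measure (Fin d → ℝ)) (Plim : Measure (Fin d → ℝ))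
    [∀ n, IsProbabilityMeasure (P n)] [IsProbabilityMeasure Plim]
    (hconv : ∀ f : BoundedContinuousFunction (Fin d → ℝ) ℝ,
      Filter.Tendsto (fun n => ∫ x, f x ∂(P n)) Filter.atTop (nhds (∫ x, f x ∂Plim)))
    (A : Set (Fin d → ℝ))
    (hAcont : Plim (frontier A) = 0) (hApos : Plim A ≠ 0)
    (hAn : ∀ n, P n A ≠ 0) :
    ∀ f : BoundedContinuousFunction (Fin d → ℝ) ℝ,
      Filter.Tendsto (fun n => ∫ x, f x ∂((P n)[|A])) Filter.atTop
        (nhds (∫ x, f x ∂(Plim[|A]))) := by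
  let μs : ℕ → ProbabilityMeasure (Fin d → ℝ) := fun n ↦ ⟨P n, inferInstance⟩
  let μ : ProbabilityMeasure (Fin d → ℝ) := ⟨Plim, inferInstance⟩
  have hμs : Tendsto μs atTop (𝓝 μ) :=
    ProbabilityMeasure.tendsto_iff_forall_integral_tendsto.mpr hconv
  exact ProbabilityMeasure.tendsto_iff_forall_integral_tendsto.mp
    (ProbabilityMeasure.tendsto_cond_of_null_frontier hμs hAcont hApos hAn)

theorem conditioned_weak_convergence {d : ℕ}
    (P : ℕ → Measure (Fin d → ℝ)) (Plim : Measure (Fin d → ℝ))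
    [∀ n, IsProbabilityMeasure (P n)] [IsProbabilityMeasure Plim]
    (hconv : ∀ f : BoundedContinuousFunction (Fin d → ℝ) ℝ,
      Filter.Tendsto (fun n => ∫ x, f x ∂(P n)) Filter.atTop (nhds (∫ x, f x ∂Plim)))
    (A : Set (Fin d → ℝ)) (hAclosed : IsClosed A)
    (hAcont : Plim (frontier A) = 0) (hApos : Plim A ≠ 0)
    (hAn : ∀ n, P n A ≠ 0) :
    ∀ f : BoundedContinuousFunction (Fin d → ℝ) ℝ,
      Filter.Tendsto (fun n => ∫ x, f x ∂((P n)[|A])) Filter.atTop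
        (nhds (∫ x, f x ∂(Plim[|A]))) :=
  conditioned_weak_convergence_general P Plim hconv A hAcont hApos hAn
end
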